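/- arXiv:2406.16719 — 6 statements merged into one kernel-verified Lean document; each statement's English description precedes it below -/
import Mathlib

section
/- Let g(F, M_s) = ν(1-ν)β_E²ν_E²F² / (α(F)((1-ν)ν_E β_E F + α(F)δ_M γ_s M_s)) for F > 0 and g(0, M_s) = 0, where α(F) = β_E F/k + ν_E + δ_E and all parameters β_E, ν_E, δ_E, δ_M, γ_s, k > 0, ν ∈ (0,1). Then g is globally Lipschitz-continuous on [0,∞) × [0,∞). -/
/-!
With `u F = F / α F` and `p = δ_M γ_s M_s`, `g = c * u ^ 2 / (A * u + p)` for the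
constants `c = ν (1 - ν) β_E² ν_E²` and `A = (1 - ν) ν_E β_E`. The map `F ↦ u F` is Lipschitz
on `[0, ∞)` with constant `1 / (ν_E + δ_E)`, and on the closed quadrant `(x, y) ↦ x² / (A x + y)`
is Lipschitz in `x` with constant `1 / A` and in `y` with constant `1 / A²`; separate bounds in
the two variables add up to a joint one.
-/

noncomputable def gfun (bE nE dE dM gs k nu : ℝ) (F Ms : ℝ) : ℝ :=
  if 0 < F then
    nu * (1 - nu) * bE ^ 2 * nE ^ 2 * F ^ 2 /
      ((bE * F / k + nE + dE) *
        ((1 - nu) * nE * bE * F + (bE * F / k + nE + dE) * dM * gs * Ms))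
  else 0

open Set NNReal

theorem LipschitzOnWith.prod_of_left_right {α β γ : Type*} [PseudoEMetricSpace α]
    [PseudoEMetricSpace β] [PseudoEMetricSpace γ] {f : α × β → γ} {s : Set α} {t : Set β}
    {Kα Kβ : ℝ≥0} (hα : ∀ b ∈ t, LipschitzOnWith Kα (fun a => f (a, b)) s)
    (hβ : ∀ a ∈ s, LipschitzOnWith Kβ (fun b => f (a, b)) t) :
    LipschitzOnWith (Kα + Kβ) f (s ×ˢ t) := by
  rintro ⟨a₁, b₁⟩ ⟨ha₁, hb₁⟩ ⟨a₂, b₂⟩ ⟨ha₂, hb₂⟩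
  rw [ENNReal.coe_add, add_mul, Prod.edist_eq]
  refine (edist_triangle _ (f (a₂, b₁)) _).trans (add_le_add ?_ ?_)
  · exact (hα b₁ hb₁ ha₁ ha₂).trans (mul_right_mono (le_max_left _ _))
  · exact (hβ a₂ ha₂ hb₁ hb₂).trans (mul_right_mono (le_max_right _ _))

theorem lipschitzOnWith_div_mul_add {β m : ℝ} (hβ : 0 ≤ β) (hm : 0 < m) :
    LipschitzOnWith (Real.toNNReal m⁻¹) (fun x => x / (β * x + m)) (Ici 0) := by
  refine LipschitzOnWith.of_dist_le' fun x (hx : 0 ≤ x) x' (hx' : 0 ≤ x') => ?_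
  have hD : m ≤ β * x + m := le_add_of_nonneg_left (mul_nonneg hβ hx)
  have hD' : m ≤ β * x' + m := le_add_of_nonneg_left (mul_nonneg hβ hx')
  have hprod : m * m ≤ (β * x + m) * (β * x' + m) := mul_le_mul hD hD' hm.le (by linarith)
  have hpos : 0 < (β * x + m) * (β * x' + m) := by positivity
  rw [Real.dist_eq, Real.dist_eq, div_sub_div _ _ (by positivity) (by positivity), abs_div,
    abs_of_pos hpos, div_le_iff₀ hpos]
  calc |x * (β * x' + m) - (β * x + m) * x'| = m * |x - x'| := by
        rw [show x * (β * x' + m) - (β * x + m) * x' = m * (x - x') by ring, abs_mul,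
          abs_of_pos hm]
    _ ≤ m⁻¹ * ((β * x + m) * (β * x' + m)) * |x - x'| := by
        refine mul_le_mul_of_nonneg_right ?_ (abs_nonneg _)
        rwa [inv_mul_eq_div, le_div_iff₀ hm]
    _ = m⁻¹ * |x - x'| * ((β * x + m) * (β * x' + m)) := by ring

theorem abs_sq_div_mul_add_sub_le {A x x' y : ℝ} (hA : 0 < A) (hx : 0 ≤ x) (hx' : 0 ≤ x')
    (hy : 0 ≤ y) (hD : 0 < A * x + y) (hD' : 0 < A * x' + y) :
    |x ^ 2 / (A * x + y) - x' ^ 2 / (A * x' + y)| ≤ A⁻¹ * |x - x'| := by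
  have hpos : 0 < (A * x + y) * (A * x' + y) := mul_pos hD hD'
  have hN : 0 ≤ A * x * x' + y * (x + x') := by positivity
  -- `(A * x + y) * (A * x' + y) = A * (A * x * x' + y * (x + x')) + y ^ 2`
  have hNle : A * x * x' + y * (x + x') ≤ A⁻¹ * ((A * x + y) * (A * x' + y)) := by
    rw [← div_eq_inv_mul, le_div_iff₀ hA]
    nlinarith [sq_nonneg y]
  rw [div_sub_div _ _ hD.ne' hD'.ne', abs_div, abs_of_pos hpos, div_le_iff₀ hpos,
    show x ^ 2 * (A * x' + y) - (A * x + y) * x' ^ 2 = (x - x') * (A * x * x' + y * (x + x')) by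
      ring, abs_mul, abs_of_nonneg hN]
  calc |x - x'| * (A * x * x' + y * (x + x'))
      ≤ |x - x'| * (A⁻¹ * ((A * x + y) * (A * x' + y))) :=
        mul_le_mul_of_nonneg_left hNle (abs_nonneg _)
    _ = A⁻¹ * |x - x'| * ((A * x + y) * (A * x' + y)) := by ring

theorem sq_div_mul_self (A x : ℝ) (hA : A ≠ 0) : x ^ 2 / (A * x) = A⁻¹ * x := by
  rcases eq_or_ne x 0 with rfl | hx
  · simp
  · field_simp

theorem lipschitzOnWith_sq_div_mul_add_left {A y : ℝ} (hA : 0 < A) (hy : 0 ≤ y) :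
    LipschitzOnWith (Real.toNNReal A⁻¹) (fun x => x ^ 2 / (A * x + y)) (Ici 0) := by
  rcases hy.eq_or_lt with rfl | hy
  · simp only [add_zero, sq_div_mul_self A _ hA.ne']
    refine LipschitzOnWith.of_dist_le' fun x _ x' _ => ?_
    rw [Real.dist_eq, Real.dist_eq, ← mul_sub, abs_mul, abs_of_pos (inv_pos.2 hA)]
  refine LipschitzOnWith.of_dist_le' fun x (hx : 0 ≤ x) x' (hx' : 0 ≤ x') => ?_
  exact abs_sq_div_mul_add_sub_le hA hx hx' hy.le (by positivity) (by positivity)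

theorem lipschitzOnWith_sq_div_mul_add_right {A x : ℝ} (hA : 0 < A) (hx : 0 ≤ x) :
    LipschitzOnWith (Real.toNNReal (A ^ 2)⁻¹) (fun y => x ^ 2 / (A * x + y)) (Ici 0) := by
  rcases hx.eq_or_lt with rfl | hx
  · simpa using (LipschitzWith.const' (0:ℝ)).lipschitzOnWith
  refine LipschitzOnWith.of_dist_le' fun y (hy : 0 ≤ y) y' (hy' : 0 ≤ y') => ?_
  have hD : A * x ≤ A * x + y := le_add_of_nonneg_right hy
  have hD' : A * x ≤ A * x + y' := le_add_of_nonneg_right hy'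
  have hpos : 0 < (A * x + y) * (A * x + y') := by positivity
  have hprod : (A * x) * (A * x) ≤ (A * x + y) * (A * x + y') :=
    mul_le_mul hD hD' (by positivity) (by positivity)
  rw [Real.dist_eq, Real.dist_eq, div_sub_div _ _ (by positivity) (by positivity), abs_div,
    abs_of_pos hpos, div_le_iff₀ hpos,
    show x ^ 2 * (A * x + y') - (A * x + y) * x ^ 2 = x ^ 2 * (y' - y) by ring, abs_mul,
    abs_sub_comm y', abs_of_nonneg (sq_nonneg x)]
  calc x ^ 2 * |y - y'| = (A ^ 2)⁻¹ * ((A * x) * (A * x)) * |y - y'| := by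
        field_simp
    _ ≤ (A ^ 2)⁻¹ * ((A * x + y) * (A * x + y')) * |y - y'| := by gcongr
    _ = (A ^ 2)⁻¹ * |y - y'| * ((A * x + y) * (A * x + y')) := by ring

theorem lipschitzOnWith_sq_div_mul_add {A : ℝ} (hA : 0 < A) :
    LipschitzOnWith (Real.toNNReal A⁻¹ + Real.toNNReal (A ^ 2)⁻¹)
      (fun p : ℝ × ℝ => p.1 ^ 2 / (A * p.1 + p.2)) (Ici 0 ×ˢ Ici 0) :=
  LipschitzOnWith.prod_of_left_right (fun _ hy => lipschitzOnWith_sq_div_mul_add_left hA hy)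
    (fun _ hx => lipschitzOnWith_sq_div_mul_add_right hA hx)

theorem LipschitzOnWith.congr {α β : Type*} [PseudoEMetricSpace α] [PseudoEMetricSpace β]
    {K : ℝ≥0} {f g : α → β} {s : Set α} (hf : LipschitzOnWith K f s) (hfg : EqOn f g s) :
    LipschitzOnWith K g s := fun x hx y hy => by
  simpa only [← hfg hx, ← hfg hy] using hf hx hy

theorem gfun_eq_sq_div_mul_add {bE nE dE dM gs k nu F M : ℝ} (hbE : 0 < bE) (hnE : 0 < nE)
    (hdE : 0 < dE) (hk : 0 < k) (hF : 0 ≤ F) :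
    gfun bE nE dE dM gs k nu F M = nu * (1 - nu) * bE ^ 2 * nE ^ 2 *
      ((F / (bE / k * F + (nE + dE))) ^ 2 /
        ((1 - nu) * nE * bE * (F / (bE / k * F + (nE + dE))) + dM * gs * M)) := by
  rcases hF.eq_or_lt with rfl | hF
  · simp [gfun]
  have ha : bE / k * F + (nE + dE) ≠ 0 := by positivity
  rw [gfun, if_pos hF]
  field_simp
  ring

theorem stmt_0 (bE nE dE dM gs k nu : ℝ)
    (hbE : 0 < bE) (hnE : 0 < nE) (hdE : 0 < dE) (hdM : 0 < dM)
    (hgs : 0 < gs) (hk : 0 < k) (hnu : nu ∈ Set.Ioo (0:ℝ) 1) :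
    ∃ L : NNReal, LipschitzOnWith L
      (fun p : ℝ × ℝ => gfun bE nE dE dM gs k nu p.1 p.2)
      (Set.Ici (0:ℝ) ×ˢ Set.Ici (0:ℝ)) := by
  obtain ⟨-, hnu1⟩ := hnu
  have hA : 0 < (1 - nu) * nE * bE := by have := sub_pos.2 hnu1; positivity
  set u : ℝ → ℝ := fun F => F / (bE / k * F + (nE + dE))
  set Φ : ℝ × ℝ → ℝ × ℝ := fun p => (u p.1, dM * gs * p.2)
  have hu : LipschitzOnWith _ u (Ici 0) :=
    lipschitzOnWith_div_mul_add (by positivity) (by positivity)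
  have hΦ : LipschitzOnWith _ Φ (Ici 0 ×ˢ Ici 0) :=
    (hu.comp LipschitzWith.prod_fst.lipschitzOnWith fun p hp => hp.1).prodMk
      ((lipschitzWith_smul (dM * gs)).comp LipschitzWith.prod_snd).lipschitzOnWith
  have hΦ_maps : MapsTo Φ (Ici 0 ×ˢ Ici 0) (Ici 0 ×ˢ Ici 0) :=
    fun p ⟨(hp1 : 0 ≤ p.1), (hp2 : 0 ≤ p.2)⟩ =>
      ⟨show 0 ≤ p.1 / (bE / k * p.1 + (nE + dE)) by positivity,
        show 0 ≤ dM * gs * p.2 by positivity⟩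
  refine ⟨_, ((lipschitzWith_smul (nu * (1 - nu) * bE ^ 2 * nE ^ 2)).comp_lipschitzOnWith
    ((lipschitzOnWith_sq_div_mul_add hA).comp hΦ hΦ_maps)).congr fun p ⟨hp1, _⟩ => ?_⟩
  exact (gfun_eq_sq_div_mul_add hbE hnE hdE hk hp1).symm
end

section
/- Under the assumption R₀ := νβ_Eν_E/(δ_F(ν_E+δ_E)) > 1, the uncontrolled reduced system F' = g(F, M_s) - δ_F F, M_s' = -δ_s M_s has exactly two equilibria in [0,∞)×[0,∞): the extinction equilibrium (0,0) and the persistence equilibrium (F̄, 0) with F̄ = (νν_E k/δ_F)(1 - 1/R₀). That is, g(F, 0) = δ_F F holds for F ≥ 0 exactly when F = 0 or F = F̄. -/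
noncomputable def alpha (bE nE dE k F : ℝ) : ℝ := bE * F / k + nE + dE

noncomputable def persistenceLevel (bE nE dE dF k nu : ℝ) : ℝ :=
  k * (nu * bE * nE / dF - (nE + dE)) / bE

section Equilibria

variable {bE nE dE dM dF gs k nu F : ℝ}

theorem gfun_zero_zero : gfun bE nE dE dM gs k nu 0 0 = 0 := by
  simp [gfun]

theorem gfun_apply_zero_of_pos (hnu : nu ≠ 1) (hnE : nE ≠ 0) (hbE : bE ≠ 0) (hF : 0 < F) :
    gfun bE nE dE dM gs k nu F 0 = nu * bE * nE * F / alpha bE nE dE k F := by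
  have hc : (1 - nu) * nE * bE * F ≠ 0 := by
    have : 1 - nu ≠ 0 := sub_ne_zero.mpr hnu.symm
    positivity
  rw [gfun, if_pos hF, mul_zero, add_zero, alpha]
  calc _ = nu * bE * nE * F * ((1 - nu) * nE * bE * F) /
        ((bE * F / k + nE + dE) * ((1 - nu) * nE * bE * F)) := by ring
    _ = _ := mul_div_mul_right _ _ hc

theorem eq_mul_alpha_iff (hbE : bE ≠ 0) (hdF : dF ≠ 0) (hk : k ≠ 0) :
    nu * bE * nE = dF * alpha bE nE dE k F ↔ F = persistenceLevel bE nE dE dF k nu := by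
  unfold alpha persistenceLevel
  constructor <;> intro h
  · field_simp at h ⊢
    linear_combination -h
  · rw [h]
    field_simp
    ring

theorem persistenceLevel_eq (hdF : dF ≠ 0) (hbE : bE ≠ 0) (hnE : nE ≠ 0) (hnu : nu ≠ 0) :
    persistenceLevel bE nE dE dF k nu =
      nu * nE * k / dF * (1 - 1 / (nu * bE * nE / (dF * (nE + dE)))) := by
  unfold persistenceLevel
  field_simp

theorem gfun_apply_zero_eq_iff (hnu : nu ≠ 1) (hbE : 0 < bE) (hnE : 0 < nE) (hdE : 0 < dE)
    (hdF : 0 < dF) (hk : 0 < k) (hF : 0 ≤ F) :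
    gfun bE nE dE dM gs k nu F 0 = dF * F ↔
      F = 0 ∨ F = persistenceLevel bE nE dE dF k nu := by
  rcases hF.eq_or_lt with rfl | hpos
  · simp [gfun_zero_zero]
  · have hα : 0 < alpha bE nE dE k F := by unfold alpha; positivity
    rw [gfun_apply_zero_of_pos hnu hnE.ne' hbE.ne' hpos, div_eq_iff hα.ne', mul_right_comm dF,
      mul_left_inj' hpos.ne', eq_mul_alpha_iff hbE.ne' hdF.ne' hk.ne', or_iff_right hpos.ne']

end Equilibria

theorem stmt_3_general (bE nE dE dM dF ds gs k nu : ℝ)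
    (hbE : 0 < bE) (hnE : 0 < nE) (hdE : 0 < dE)
    (hdF : 0 < dF) (hds : 0 < ds) (hk : 0 < k)
    (hnu : nu ∈ Set.Ioo (0:ℝ) 1) :
    ∀ F Ms : ℝ, 0 ≤ F → 0 ≤ Ms →
      ((gfun bE nE dE dM gs k nu F Ms - dF * F = 0 ∧ -ds * Ms = 0) ↔
        ((F, Ms) = ((0:ℝ), (0:ℝ)) ∨
          (F, Ms) = (nu * nE * k / dF * (1 - 1 / (nu * bE * nE / (dF * (nE + dE)))), (0:ℝ)))) := by
  intro F Ms hF _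
  have hMs : -ds * Ms = 0 ↔ Ms = 0 := by simp [hds.ne']
  rw [hMs, ← persistenceLevel_eq hdF.ne' hbE.ne' hnE.ne' hnu.1.ne']
  simp only [Prod.mk.injEq, ← or_and_right]
  refine and_congr_left fun hMs0 => ?_
  rw [hMs0, sub_eq_zero]
  exact gfun_apply_zero_eq_iff hnu.2.ne hbE hnE hdE hdF hk hF

theorem stmt_3 (bE nE dE dM dF ds gs k nu : ℝ)
    (hbE : 0 < bE) (hnE : 0 < nE) (hdE : 0 < dE) (hdM : 0 < dM)
    (hdF : 0 < dF) (hds : 0 < ds) (hgs : 0 < gs) (hk : 0 < k)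
    (hnu : nu ∈ Set.Ioo (0:ℝ) 1)
    (hR0 : 1 < nu * bE * nE / (dF * (nE + dE))) :
    ∀ F Ms : ℝ, 0 ≤ F → 0 ≤ Ms →
      ((gfun bE nE dE dM gs k nu F Ms - dF * F = 0 ∧ -ds * Ms = 0) ↔
        ((F, Ms) = ((0:ℝ), (0:ℝ)) ∨
          (F, Ms) = (nu * nE * k / dF * (1 - 1 / (nu * bE * nE / (dF * (nE + dE)))), (0:ℝ)))) :=
  stmt_3_general bE nE dE dM dF ds gs k nu hbE hnE hdE hdF hds hk hnu
end

section
/- Fix F̂ > 0 and set ε := νkβ_Eν_E/(ν_E k + F̂β_E + δ_E k). Define M_s*(F) := (1-ν)ν_E β_E² k F (F̂ - F) / (γ_s δ_M (β_E F + k(ν_E + δ_E))²). Then M_s*(0) = 0, M_s*(F) > 0 for all F ∈ (0, F̂), and g(F, M_s*(F)) = εF for all F ≥ 0. -/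
noncomputable def Mstar (bE nE dE dM gs k nu Fhat : ℝ) (F : ℝ) : ℝ :=
  (1 - nu) * nE * bE ^ 2 * k * F * (Fhat - F) /
    (gs * dM * (bE * F + k * (nE + dE)) ^ 2)

theorem stmt_4 (bE nE dE dM gs k nu Fhat : ℝ)
    (hbE : 0 < bE) (hnE : 0 < nE) (hdE : 0 < dE) (hdM : 0 < dM)
    (hgs : 0 < gs) (hk : 0 < k) (hnu : nu ∈ Set.Ioo (0:ℝ) 1) (hF : 0 < Fhat) :
    Mstar bE nE dE dM gs k nu Fhat 0 = 0 ∧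
    (∀ F ∈ Set.Ioo (0:ℝ) Fhat, 0 < Mstar bE nE dE dM gs k nu Fhat F) ∧
    (∀ F : ℝ, 0 ≤ F →
      gfun bE nE dE dM gs k nu F (Mstar bE nE dE dM gs k nu Fhat F) =
        nu * k * bE * nE / (nE * k + Fhat * bE + dE * k) * F) := by
  obtain ⟨hnu0, hnu1⟩ := hnu
  have h1nu : (0:ℝ) < 1 - nu := by linarith
  refine ⟨by simp [Mstar], ?_, ?_⟩
  · rintro F ⟨hF0, hFh⟩
    have hs : 0 < Fhat - F := by linarith
    unfold Mstar
    positivity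
  · intro F hF0
    rcases eq_or_lt_of_le hF0 with h | h
    · simp [gfun, ← h]
    · unfold gfun Mstar
      rw [if_pos h]
      have hD : 0 < bE * F + k * (nE + dE) := by positivity
      have halpha : 0 < bE * F / k + nE + dE := by positivity
      have key : (bE * F / k + nE + dE) * dM * gs *
          ((1 - nu) * nE * bE ^ 2 * k * F * (Fhat - F) /
            (gs * dM * (bE * F + k * (nE + dE)) ^ 2)) =
          (1 - nu) * nE * bE ^ 2 * F * (Fhat - F) / (bE * F + k * (nE + dE)) := by
        rw [eq_div_iff hD.ne']
        field_simp
        ring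
      rw [key]
      have key2 : (1 - nu) * nE * bE * F +
          (1 - nu) * nE * bE ^ 2 * F * (Fhat - F) / (bE * F + k * (nE + dE)) =
          (1 - nu) * nE * bE * F * (bE * Fhat + k * (nE + dE)) /
            (bE * F + k * (nE + dE)) := by
        field_simp
        ring
      rw [key2]
      have hE : 0 < bE * Fhat + k * (nE + dE) := by positivity
      have hE2 : 0 < nE * k + Fhat * bE + dE * k := by positivity
      rw [mul_div_assoc', div_div_eq_mul_div]
      rw [div_mul_eq_mul_div, div_eq_div_iff (by positivity) hE2.ne']
      field_simp
      ring
end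

section
/- Let M_s*(F) := (1-ν)ν_E β_E² k F (F̂ - F) / (γ_s δ_M (β_E F + k(ν_E + δ_E))²) for a fixed F̂ > 0. Then for all F ∈ [0, F̂], M_s*(F) ≥ (dM_s*/dF)(F) · F. -/
/-!
Writing `M_s*(F) = F * h(F)` with `h(F) = K * (F̂ - F) / (β_E F + k(ν_E + δ_E))²` and `K ≥ 0`,
the product rule gives `M_s*(F) - F * M_s*'(F) = -F² h'(F)`, so it suffices that `h` is
nonincreasing on `[0, F̂]`; there both the numerator `F̂ - F ≥ 0` decreases and the positive
denominator increases.
-/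

theorem deriv_mul_self_mul_le {h : ℝ → ℝ} {h' x : ℝ} (hh : HasDerivAt h h' x) (hh' : h' ≤ 0) :
    deriv (fun y => y * h y) x * x ≤ x * h x := by
  rw [((hasDerivAt_id' x).fun_mul hh).deriv]
  nlinarith [mul_nonpos_of_nonneg_of_nonpos (sq_nonneg x) hh']

theorem hasDerivAt_sub_div_sq {a b c x : ℝ} (hx : b * x + a ≠ 0) :
    HasDerivAt (fun y => (c - y) / (b * y + a) ^ 2)
      (-(b * x + a + 2 * b * (c - x)) / (b * x + a) ^ 3) x := by
  have hlin : HasDerivAt (fun y => b * y + a) b x := by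
    simpa using ((hasDerivAt_id x).const_mul b).add_const a
  refine (((hasDerivAt_id' x).const_sub c).fun_div (hlin.fun_pow 2) (pow_ne_zero 2 hx)).congr_deriv ?_
  field_simp
  ring

theorem Mstar_eq_mul (bE nE dE dM gs k nu Fhat : ℝ) :
    Mstar bE nE dE dM gs k nu Fhat = fun F =>
      F * ((1 - nu) * nE * bE ^ 2 * k / (gs * dM) *
        ((Fhat - F) / (bE * F + k * (nE + dE)) ^ 2)) := by
  funext F
  simp only [Mstar, div_eq_mul_inv, mul_inv]
  ring

theorem stmt_6_general (bE nE dE dM gs k nu Fhat : ℝ)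
    (hbE : 0 < bE) (hnE : 0 < nE) (hdE : 0 < dE) (hdM : 0 < dM)
    (hgs : 0 < gs) (hk : 0 < k) (hnu : nu ∈ Set.Ioo (0:ℝ) 1) :
    ∀ F ∈ Set.Icc (0:ℝ) Fhat,
      deriv (Mstar bE nE dE dM gs k nu Fhat) F * F ≤ Mstar bE nE dE dM gs k nu Fhat F := by
  rintro F ⟨hF0, hFle⟩
  have hK : 0 ≤ (1 - nu) * nE * bE ^ 2 * k / (gs * dM) := by
    have : 0 < 1 - nu := sub_pos.mpr hnu.2
    positivity
  have hD : 0 < bE * F + k * (nE + dE) := by positivity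
  have hq := hasDerivAt_sub_div_sq (c := Fhat) hD.ne'
  rw [Mstar_eq_mul]
  refine deriv_mul_self_mul_le (hq.const_mul _) (mul_nonpos_of_nonneg_of_nonpos hK ?_)
  have : 0 ≤ Fhat - F := sub_nonneg.mpr hFle
  exact div_nonpos_of_nonpos_of_nonneg (neg_nonpos.mpr (by positivity)) (by positivity)

theorem stmt_6 (bE nE dE dM gs k nu Fhat : ℝ)
    (hbE : 0 < bE) (hnE : 0 < nE) (hdE : 0 < dE) (hdM : 0 < dM)
    (hgs : 0 < gs) (hk : 0 < k) (hnu : nu ∈ Set.Ioo (0:ℝ) 1) (hF : 0 < Fhat) :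
    ∀ F ∈ Set.Icc (0:ℝ) Fhat,
      deriv (Mstar bE nE dE dM gs k nu Fhat) F * F ≤ Mstar bE nE dE dM gs k nu Fhat F :=
  stmt_6_general bE nE dE dM gs k nu Fhat hbE hnE hdE hdM hgs hk hnu
end

section
/- Define π(F, M_s) := (g(F, M_s) - g(F, M_s*(F)))/(M_s - M_s*(F)) · F when M_s ≠ M_s*(F), and π(F, M_s) := (∂g/∂M_s)(F, M_s) · F when M_s = M_s*(F). Then π(F, M_s) ≤ 0 for all (F, M_s) ∈ [0,∞) × [0,∞). -/
noncomputable def pifun (bE nE dE dM gs k nu Fhat : ℝ) (F Ms : ℝ) : ℝ :=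
  if Ms = Mstar bE nE dE dM gs k nu Fhat F then
    deriv (fun m => gfun bE nE dE dM gs k nu F m) Ms * F
  else
    (gfun bE nE dE dM gs k nu F Ms -
      gfun bE nE dE dM gs k nu F (Mstar bE nE dE dM gs k nu Fhat F)) /
      (Ms - Mstar bE nE dE dM gs k nu Fhat F) * F

lemma antitoneOn_div_mul_affine {a b c d : ℝ} (hc : 0 ≤ c) (ha : 0 < a) (hd : 0 ≤ d) :
    AntitoneOn (fun m => c / (a * (b + d * m))) {m | 0 < b + d * m} := by
  intro x hx y _ hxy
  have hx' : 0 < b + d * x := hx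
  exact div_le_div_of_nonneg_left hc (by positivity) (by gcongr)

section Slice

variable {bE nE dE dM gs k nu F : ℝ}

lemma gfun_antitoneOn (hbE : 0 < bE) (hnE : 0 < nE) (hdE : 0 < dE) (hdM : 0 < dM)
    (hgs : 0 < gs) (hk : 0 < k) (hnu : nu ∈ Set.Icc (0 : ℝ) 1) (hF : 0 < F) :
    AntitoneOn (gfun bE nE dE dM gs k nu F)
      {m | 0 < (1 - nu) * nE * bE * F + (bE * F / k + nE + dE) * dM * gs * m} := by
  have hnu0 : 0 ≤ nu := hnu.1
  have h1nu : 0 ≤ 1 - nu := by linarith [hnu.2]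
  have hc : 0 ≤ nu * (1 - nu) * bE ^ 2 * nE ^ 2 * F ^ 2 := by positivity
  have hd : 0 ≤ (bE * F / k + nE + dE) * dM * gs := by positivity
  unfold gfun
  simp only [if_pos hF]
  exact antitoneOn_div_mul_affine hc (by positivity) hd

lemma add_mul_Mstar_pos {Fhat : ℝ} (hbE : 0 < bE) (hnE : 0 < nE) (hdE : 0 < dE)
    (hdM : 0 < dM) (hgs : 0 < gs) (hk : 0 < k) (hnu : nu < 1) (hFhat : 0 ≤ Fhat) (hF : 0 < F) :
    0 < (1 - nu) * nE * bE * F +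
      (bE * F / k + nE + dE) * dM * gs * Mstar bE nE dE dM gs k nu Fhat F := by
  have h1nu : 0 < 1 - nu := by linarith
  have hS : 0 < bE * F + k * (nE + dE) := by positivity
  have hsubst : (1 - nu) * nE * bE * F +
      (bE * F / k + nE + dE) * dM * gs * Mstar bE nE dE dM gs k nu Fhat F =
      (1 - nu) * nE * bE * F * (bE * Fhat + k * (nE + dE)) / (bE * F + k * (nE + dE)) := by
    simp only [Mstar]
    field_simp
    ring
  rw [hsubst]
  positivity

end Slice

theorem stmt_9 (bE nE dE dM gs k nu Fhat : ℝ)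
    (hbE : 0 < bE) (hnE : 0 < nE) (hdE : 0 < dE) (hdM : 0 < dM)
    (hgs : 0 < gs) (hk : 0 < k) (hnu : nu ∈ Set.Ioo (0:ℝ) 1) (hF : 0 < Fhat) :
    ∀ F Ms : ℝ, 0 ≤ F → 0 ≤ Ms → pifun bE nE dE dM gs k nu Fhat F Ms ≤ 0 := by
  intro F Ms hF0 hMs
  rcases hF0.eq_or_lt with rfl | hFpos
  · simp [pifun]
  set s := {m | 0 < (1 - nu) * nE * bE * F + (bE * F / k + nE + dE) * dM * gs * m}
  have hanti : AntitoneOn (gfun bE nE dE dM gs k nu F) s :=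
    gfun_antitoneOn hbE hnE hdE hdM hgs hk (Set.Ioo_subset_Icc_self hnu) hFpos
  have hMs_mem : Ms ∈ s := by
    have : 0 < 1 - nu := by linarith [hnu.2]
    rw [Set.mem_ofPred_eq]
    positivity
  have hMstar_mem : Mstar bE nE dE dM gs k nu Fhat F ∈ s :=
    add_mul_Mstar_pos hbE hnE hdE hdM hgs hk hnu.2 hF.le hFpos
  unfold pifun
  split_ifs <;> refine mul_nonpos_of_nonpos_of_nonneg ?_ hF0
  · have hs_open : IsOpen s := isOpen_lt continuous_const (by fun_prop)
    rw [← derivWithin_of_isOpen hs_open hMs_mem]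
    exact hanti.derivWithin_nonpos
  · rw [← slope_def_field]
    exact hanti.slope_nonpos hMstar_mem hMs_mem
end

section
/- Under R₀ > 1, for any F₂ > F̄ := (νν_E k/δ_F)(1 - 1/R₀), the constant σ := δ_F - νβ_Eν_E/α(F₂) is strictly positive, and for all F ≥ F₂ and M_s ≥ 0 one has g(F, M_s) - δ_F F ≤ -σF. -/
/-!
Dropping the `M_s` term from the denominator only increases `g`, and `g(F, 0) = νβ_Eν_E F / α(F)`.
Since `α` is increasing, this is at most `νβ_Eν_E F / α(F₂)` for `F ≥ F₂`. The condition
`F̄ < F₂` is a rewriting of `νβ_Eν_E < δ_F α(F₂)`, i.e. `σ > 0`, and `R₀ > 1` makes `F̄`,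
hence every `F ≥ F₂`, positive.
-/

section

variable {bE nE dE dM gs k nu : ℝ}

theorem gfun_zero_right {F : ℝ} (hF : 0 < F) (hbE : bE ≠ 0) (hnE : nE ≠ 0) (hnu : nu ≠ 1) :
    gfun bE nE dE dM gs k nu F 0 = nu * bE * nE * F / (bE * F / k + nE + dE) := by
  have h1nu : 1 - nu ≠ 0 := sub_ne_zero.mpr hnu.symm
  rw [gfun, if_pos hF]
  by_cases hA : bE * F / k + nE + dE = 0
  · simp [hA]
  · field_simp
    ring

theorem gfun_le_gfun_zero_right (hbE : 0 < bE) (hnE : 0 < nE) (hdM : 0 ≤ dM) (hgs : 0 ≤ gs)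
    (hnu : nu ∈ Set.Ioo (0 : ℝ) 1) {F Ms : ℝ} (hA : 0 < bE * F / k + nE + dE) (hMs : 0 ≤ Ms) :
    gfun bE nE dE dM gs k nu F Ms ≤ gfun bE nE dE dM gs k nu F 0 := by
  obtain ⟨hnu0, hnu1⟩ := hnu
  unfold gfun
  split_ifs with hF
  · have h1nu : 0 < 1 - nu := sub_pos.mpr hnu1
    gcongr
  · rfl

end

theorem threshold_lt_iff {bE nE dE dF k nu F2 : ℝ} (hbE : 0 < bE) (hnE : nE ≠ 0) (hdF : 0 < dF)
    (hk : 0 < k) (hnu : nu ≠ 0) :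
    nu * nE * k / dF * (1 - 1 / (nu * bE * nE / (dF * (nE + dE)))) < F2 ↔
      nu * bE * nE < dF * (bE * F2 / k + nE + dE) := by
  have hthr : nu * nE * k / dF * (1 - 1 / (nu * bE * nE / (dF * (nE + dE))))
      = k / (dF * bE) * (nu * bE * nE - dF * (nE + dE)) := by
    field_simp
  have hrhs : dF * (bE * F2 / k + nE + dE) = dF * bE / k * F2 + dF * (nE + dE) := by
    field_simp
    ring
  rw [hthr, hrhs, ← sub_lt_iff_lt_add, ← div_lt_iff₀' (by positivity), div_div_eq_mul_div,
    div_mul_eq_mul_div, mul_comm k]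

theorem stmt_11_general (bE nE dE dM dF gs k nu F2 : ℝ)
    (hbE : 0 < bE) (hnE : 0 < nE) (hdM : 0 < dM)
    (hdF : 0 < dF) (hgs : 0 < gs) (hk : 0 < k) (hnu : nu ∈ Set.Ioo (0:ℝ) 1)
    (hR0 : 1 < nu * bE * nE / (dF * (nE + dE)))
    (hF2 : nu * nE * k / dF * (1 - 1 / (nu * bE * nE / (dF * (nE + dE)))) < F2) :
    0 < dF - nu * bE * nE / (bE * F2 / k + nE + dE) ∧
    ∀ F Ms : ℝ, F2 ≤ F → 0 ≤ Ms →
      gfun bE nE dE dM gs k nu F Ms - dF * F ≤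
        -((dF - nu * bE * nE / (bE * F2 / k + nE + dE)) * F) := by
  have hnu0 := hnu.1
  have hc : 0 < nu * bE * nE := by positivity
  have hF2pos : 0 < F2 := by
    have hR0' : 0 < 1 - 1 / (nu * bE * nE / (dF * (nE + dE))) :=
      sub_pos.mpr ((div_lt_one (by positivity)).mpr hR0)
    exact lt_trans (mul_pos (by positivity) hR0') hF2
  have hcA2 := (threshold_lt_iff hbE hnE.ne' hdF hk hnu0.ne').mp hF2
  have hA2 : 0 < bE * F2 / k + nE + dE := pos_of_mul_pos_right (hc.trans hcA2) hdF.le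
  refine ⟨sub_pos.mpr ((div_lt_iff₀ hA2).mpr hcA2), fun F Ms hF hMs => ?_⟩
  have hFpos : 0 < F := hF2pos.trans_le hF
  have hAA2 : bE * F2 / k + nE + dE ≤ bE * F / k + nE + dE := by gcongr
  have hg : gfun bE nE dE dM gs k nu F Ms ≤ nu * bE * nE * F / (bE * F2 / k + nE + dE) :=
    calc gfun bE nE dE dM gs k nu F Ms
        ≤ gfun bE nE dE dM gs k nu F 0 :=
          gfun_le_gfun_zero_right hbE hnE hdM.le hgs.le hnu (hA2.trans_le hAA2) hMs
      _ = nu * bE * nE * F / (bE * F / k + nE + dE) :=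
          gfun_zero_right hFpos hbE.ne' hnE.ne' hnu.2.ne
      _ ≤ nu * bE * nE * F / (bE * F2 / k + nE + dE) := by gcongr
  rw [mul_div_right_comm] at hg
  linarith

theorem stmt_11 (bE nE dE dM dF gs k nu F2 : ℝ)
    (hbE : 0 < bE) (hnE : 0 < nE) (hdE : 0 < dE) (hdM : 0 < dM)
    (hdF : 0 < dF) (hgs : 0 < gs) (hk : 0 < k) (hnu : nu ∈ Set.Ioo (0:ℝ) 1)
    (hR0 : 1 < nu * bE * nE / (dF * (nE + dE)))
    (hF2 : nu * nE * k / dF * (1 - 1 / (nu * bE * nE / (dF * (nE + dE)))) < F2) :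
    0 < dF - nu * bE * nE / (bE * F2 / k + nE + dE) ∧
    ∀ F Ms : ℝ, F2 ≤ F → 0 ≤ Ms →
      gfun bE nE dE dM gs k nu F Ms - dF * F ≤
        -((dF - nu * bE * nE / (bE * F2 / k + nE + dE)) * F) :=
  stmt_11_general bE nE dE dM dF gs k nu F2 hbE hnE hdM hdF hgs hk hnu hR0 hF2
end
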